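/- Graham–Pollak via strings: n(1,d) = d+1 for all d ≥ 1, i.e., the maximum size of a family F ⊆ {0,1,*}^d with D(x,y) = 1 for all distinct x,y ∈ F is d+1. -/
import Mathlib


open Finset

/-- Number of coordinates where one string has 0 and the other 1. -/
def Dd {d : ℕ} (x y : Fin d → Option Bool) : ℕ :=
  (univ.filter fun i => ∃ b : Bool, x i = some b ∧ y i = some !b).card

/-- The subcube of binary strings agreeing with `x` on all non-joker coordinates. -/
def Hcube {d : ℕ} (x : Fin d → Option Bool) : Finset (Fin d → Bool) :=
  univ.filter fun u => ∀ i : Fin d, ∀ b : Bool, x i = some b → u i = b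

/-- Number of joker (`*`) coordinates of `x`. -/
def jok {d : ℕ} (x : Fin d → Option Bool) : ℕ :=
  (univ.filter fun i => x i = none).card

/-- `k`-neighborly family of strings in `{0,1,*}^d`. -/
def Nbly {d : ℕ} (k : ℕ) (F : Finset (Fin d → Option Bool)) : Prop :=
  ∀ x ∈ F, ∀ y ∈ F, x ≠ y → 1 ≤ Dd x y ∧ Dd x y ≤ k

/-- `n(k,d)`: maximum size of a `k`-neighborly family in `{0,1,*}^d`. -/
noncomputable def nbox (k d : ℕ) : ℕ :=
  sSup {n | ∃ F : Finset (Fin d → Option Bool), Nbly k F ∧ F.card = n}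

lemma Dd_self {d : ℕ} (x : Fin d → Option Bool) : Dd x x = 0 := by
  unfold Dd
  rw [Finset.card_eq_zero, Finset.filter_eq_empty_iff]
  rintro i - ⟨b, h1, h2⟩
  rw [h1] at h2
  simp at h2

lemma count_split {d : ℕ} (x y : Fin d → Option Bool) :
    (univ.filter fun i => x i = some false ∧ y i = some true).card +
    (univ.filter fun i => x i = some true ∧ y i = some false).card = Dd x y := by
  classical
  unfold Dd
  rw [← Finset.card_union_of_disjoint]
  · congr 1
    rw [← Finset.filter_or]
    apply Finset.filter_congr
    intro i _
    constructor
    · rintro (⟨h1, h2⟩ | ⟨h1, h2⟩)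
      · exact ⟨false, h1, h2⟩
      · exact ⟨true, h1, h2⟩
    · rintro ⟨b, h1, h2⟩
      cases b
      · exact Or.inl ⟨h1, h2⟩
      · exact Or.inr ⟨h1, h2⟩
  · rw [Finset.disjoint_filter]
    rintro i - ⟨h1, -⟩ ⟨h2, -⟩
    rw [h1] at h2; simp at h2

lemma card_le_GP {d : ℕ} (F : Finset (Fin d → Option Bool)) (hF : Nbly 1 F) :
    F.card ≤ d + 1 := by
  classical
  -- the linear map sending t to (the d "zero-side" sums, the total sum)
  let φ : (↥F → ℝ) →ₗ[ℝ] (Fin d → ℝ) × ℝ :=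
  { toFun := fun t =>
      (fun i => ∑ x : ↥F, if (x : Fin d → Option Bool) i = some false then t x else 0,
        ∑ x : ↥F, t x)
    map_add' := by
      intro t s
      refine Prod.ext ?_ ?_
      · funext i
        show _ = (∑ x : ↥F, if (x : Fin d → Option Bool) i = some false then t x else 0)
          + ∑ x : ↥F, if (x : Fin d → Option Bool) i = some false then s x else 0
        rw [← Finset.sum_add_distrib]
        exact Finset.sum_congr rfl fun x _ => by split <;> simp
      · simp [Finset.sum_add_distrib]
    map_smul' := by
      intro c t
      refine Prod.ext ?_ ?_
      · funext i
        show _ = c * ∑ x : ↥F, if (x : Fin d → Option Bool) i = some false then t x else 0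
        rw [Finset.mul_sum]
        exact Finset.sum_congr rfl fun x _ => by split <;> simp
      · simp [Finset.mul_sum] }
  have hinj : Function.Injective φ := by
    rw [← LinearMap.ker_eq_bot, eq_bot_iff]
    intro t ht
    simp only [LinearMap.mem_ker] at ht
    have hL : ∀ i : Fin d,
        (∑ x : ↥F, if (x : Fin d → Option Bool) i = some false then t x else 0) = 0 := by
      intro i
      have := congrArg Prod.fst ht
      exact congrFun this i
    have hsum : (∑ x : ↥F, t x) = 0 := congrArg Prod.snd ht
    -- the quadratic identity
    set R : Fin d → ℝ := fun i =>
      ∑ x : ↥F, if (x : Fin d → Option Bool) i = some true then t x else 0 with hR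
    have key : (∑ i : Fin d,
        ((∑ x : ↥F, if (x : Fin d → Option Bool) i = some false then t x else 0) * R i
          + R i * (∑ x : ↥F, if (x : Fin d → Option Bool) i = some false then t x else 0)))
        = ∑ x : ↥F, ∑ y : ↥F, (Dd (x : Fin d → Option Bool) (y : Fin d → Option Bool) : ℝ)
            * (t x * t y) := by
      have expand : ∀ i : Fin d,
          ((∑ x : ↥F, if (x : Fin d → Option Bool) i = some false then t x else 0) * R i
            + R i * (∑ x : ↥F, if (x : Fin d → Option Bool) i = some false then t x else 0))
          = ∑ x : ↥F, ∑ y : ↥F,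
              ((if (x : Fin d → Option Bool) i = some false ∧
                  (y : Fin d → Option Bool) i = some true then t x * t y else 0)
               + (if (x : Fin d → Option Bool) i = some true ∧
                  (y : Fin d → Option Bool) i = some false then t x * t y else 0)) := by
        intro i
        rw [hR, Finset.sum_mul_sum, Finset.sum_mul_sum, ← Finset.sum_add_distrib]
        refine Finset.sum_congr rfl fun x _ => ?_
        rw [← Finset.sum_add_distrib]
        refine Finset.sum_congr rfl fun y _ => ?_
        congr 1
        · rw [ite_zero_mul_ite_zero]
        · rw [ite_zero_mul_ite_zero]
      rw [Finset.sum_congr rfl fun i _ => expand i]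
      rw [Finset.sum_comm]
      refine Finset.sum_congr rfl fun x _ => ?_
      rw [Finset.sum_comm]
      refine Finset.sum_congr rfl fun y _ => ?_
      rw [Finset.sum_add_distrib]
      have h1 : ∀ (P Q : Fin d → Prop) [DecidablePred P] [DecidablePred Q],
          (∑ i : Fin d, if P i ∧ Q i then t x * t y else 0)
            = ((univ.filter fun i => P i ∧ Q i).card : ℝ) * (t x * t y) := by
        intro P Q _ _
        rw [← Finset.sum_filter, Finset.sum_const, nsmul_eq_mul]
      rw [h1, h1, ← add_mul, ← Nat.cast_add, count_split]
    -- evaluate both sides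
    have lhs0 : (∑ i : Fin d,
        ((∑ x : ↥F, if (x : Fin d → Option Bool) i = some false then t x else 0) * R i
          + R i * (∑ x : ↥F, if (x : Fin d → Option Bool) i = some false then t x else 0)))
        = 0 := by
      refine Finset.sum_eq_zero fun i _ => ?_
      rw [hL i, zero_mul, mul_zero, add_zero]
    have hDd : ∀ x y : ↥F, (Dd (x : Fin d → Option Bool) (y : Fin d → Option Bool) : ℝ)
        = if x = y then 0 else 1 := by
      intro x y
      by_cases h : x = y
      · simp [h, Dd_self]
      · have hne : (x : Fin d → Option Bool) ≠ (y : Fin d → Option Bool) :=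
          fun hc => h (Subtype.ext hc)
        have := hF x x.2 y y.2 hne
        have : Dd (x : Fin d → Option Bool) (y : Fin d → Option Bool) = 1 :=
          le_antisymm this.2 this.1
        simp [h, this]
    have rhs : (∑ x : ↥F, ∑ y : ↥F,
        (Dd (x : Fin d → Option Bool) (y : Fin d → Option Bool) : ℝ) * (t x * t y))
        = - ∑ x : ↥F, t x ^ 2 := by
      have : ∀ x : ↥F, (∑ y : ↥F,
          (Dd (x : Fin d → Option Bool) (y : Fin d → Option Bool) : ℝ) * (t x * t y))
          = (∑ y : ↥F, t x * t y) - t x ^ 2 := by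
        intro x
        have : ∀ y : ↥F,
            (Dd (x : Fin d → Option Bool) (y : Fin d → Option Bool) : ℝ) * (t x * t y)
            = t x * t y - (if y = x then t x * t y else 0) := by
          intro y
          rw [hDd]
          by_cases h : x = y <;> simp [h, eq_comm]
        rw [Finset.sum_congr rfl fun y _ => this y, Finset.sum_sub_distrib,
          Finset.sum_ite_eq' Finset.univ x (fun y => t x * t y)]
        simp [pow_two]
      rw [Finset.sum_congr rfl fun x _ => this x, Finset.sum_sub_distrib]
      have h0 : (∑ x : ↥F, ∑ y : ↥F, t x * t y) = 0 := by
        rw [← Finset.sum_mul_sum Finset.univ Finset.univ t t, hsum, zero_mul]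
      rw [h0]
      ring
    rw [lhs0, rhs] at key
    have hsq : (∑ x : ↥F, t x ^ 2) = 0 := by linarith
    have : ∀ x : ↥F, t x ^ 2 = 0 := by
      intro x
      have := (Finset.sum_eq_zero_iff_of_nonneg (fun y _ => sq_nonneg (t y))).1 hsq x
        (Finset.mem_univ x)
      exact this
    have ht0 : t = 0 := by
      funext x
      simpa using sq_eq_zero_iff.mp (this x)
    simp [ht0]
  have hle := LinearMap.finrank_le_finrank_of_injective hinj
  have h1 : Module.finrank ℝ (↥F → ℝ) = F.card := by
    rw [Module.finrank_pi]
    exact Fintype.card_coe F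
  have h2 : Module.finrank ℝ ((Fin d → ℝ) × ℝ) = d + 1 := by
    rw [Module.finrank_prod, Module.finrank_pi, Module.finrank_self]
    simp
  rw [h1, h2] at hle
  exact hle

/-- The explicit neighborly family of size `d+1`. -/
def gfam (d : ℕ) (j : Fin (d + 1)) : Fin d → Option Bool :=
  fun i => if (i : ℕ) < (j : ℕ) then some false
    else if (i : ℕ) = (j : ℕ) then some true else none

lemma Dd_comm {d : ℕ} (x y : Fin d → Option Bool) : Dd x y = Dd y x := by
  unfold Dd
  congr 1
  apply Finset.filter_congr
  intro i _
  constructor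
  · rintro ⟨b, h1, h2⟩; exact ⟨!b, h2, by simpa using h1⟩
  · rintro ⟨b, h1, h2⟩; exact ⟨!b, h2, by simpa using h1⟩

lemma Dd_gfam {d : ℕ} (j j' : Fin (d + 1)) (h : (j : ℕ) < (j' : ℕ)) :
    Dd (gfam d j) (gfam d j') = 1 := by
  have hjd : (j : ℕ) < d := lt_of_lt_of_le h (Nat.lt_succ_iff.mp j'.isLt)
  unfold Dd
  rw [Finset.card_eq_one]
  refine ⟨⟨(j : ℕ), hjd⟩, ?_⟩
  ext i
  simp only [Finset.mem_filter, Finset.mem_univ, true_and, Finset.mem_singleton]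
  constructor
  · rintro ⟨b, h1, h2⟩
    unfold gfam at h1 h2
    by_cases hlt : (i : ℕ) < (j : ℕ)
    · have hlt' : (i : ℕ) < (j' : ℕ) := lt_trans hlt h
      rw [if_pos hlt] at h1
      rw [if_pos hlt'] at h2
      have hb : b = false := by simpa using h1.symm
      rw [hb] at h2
      simp at h2
    · by_cases heq : (i : ℕ) = (j : ℕ)
      · exact Fin.ext heq
      · rw [if_neg hlt, if_neg heq] at h1
        simp at h1
  · intro hi
    subst hi
    refine ⟨true, ?_, ?_⟩
    · unfold gfam
      simp
    · unfold gfam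
      have : ((⟨(j : ℕ), hjd⟩ : Fin d) : ℕ) < (j' : ℕ) := h
      rw [if_pos this]
      simp
lemma Dd_gfam' {d : ℕ} (j j' : Fin (d + 1)) (h : j ≠ j') :
    Dd (gfam d j) (gfam d j') = 1 := by
  rcases lt_or_gt_of_ne (fun hc : (j : ℕ) = (j' : ℕ) => h (Fin.ext hc)) with hlt | hgt
  · exact Dd_gfam j j' hlt
  · rw [Dd_comm]; exact Dd_gfam j' j hgt

lemma gfam_inj (d : ℕ) : Function.Injective (gfam d) := by
  intro j j' hjj
  by_contra h
  have h1 := Dd_gfam' j j' h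
  rw [hjj, Dd_self] at h1
  simp at h1

lemma lower_mem (d : ℕ) :
    (d + 1) ∈ {n | ∃ F : Finset (Fin d → Option Bool), Nbly 1 F ∧ F.card = n} := by
  classical
  refine ⟨Finset.univ.image (gfam d), ?_, ?_⟩
  · intro x hx y hy hxy
    simp only [Finset.mem_image] at hx hy
    obtain ⟨j, -, rfl⟩ := hx
    obtain ⟨j', -, rfl⟩ := hy
    have hne : j ≠ j' := fun hc => hxy (by rw [hc])
    rw [Dd_gfam' j j' hne]
    exact ⟨le_refl 1, le_refl 1⟩
  · rw [Finset.card_image_of_injective _ (gfam_inj d)]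
    simp

theorem stmt_12 {d : ℕ} (hd : 1 ≤ d) : nbox 1 d = d + 1 := by
  unfold nbox
  have hmem := lower_mem d
  have hbdd : BddAbove {n | ∃ F : Finset (Fin d → Option Bool), Nbly 1 F ∧ F.card = n} := by
    refine ⟨d + 1, ?_⟩
    rintro n ⟨F, hF, rfl⟩
    exact card_le_GP F hF
  refine le_antisymm ?_ (le_csSup hbdd hmem)
  refine csSup_le ⟨d + 1, hmem⟩ ?_
  rintro n ⟨F, hF, rfl⟩
  exact card_le_GP F hF
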